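/- arXiv:0910.4780 — 4 statements merged into one kernel-verified Lean document; each statement's English description precedes it below -/
import Mathlib

section
/- The system of three linear equations over the field of rational functions ℚ(q): (i) E = q/(1-q) + q/(1-q)^2·E + q/(1-q)·F + q^2/(1-q)^2·(F-E) + q^2/(1-q)^2·G; (ii) F = q/(1-q) + q^2/(1-q)^2 + q/(1-q)^2·E + 2q^2/(1-q)^3·E + q/(1-q)·F + q^2/(1-q)^2·F + 3q^2/(1-q)^2·(F-E) + 2q^3/(1-q)^3·(F-E) + 2q^2/(1-q)^2·G + 2q^3/(1-q)^3·G; (iii) G = q^2/(1-q)^2 + 2q^2/(1-q)^2·E + 2q^2/(1-q)^3·E + 2q^2/(1-q)^2·G + 2q^3/(1-q)^3·G, has the unique solution with E = q(1-6q+11q^2-6q^3+2q^4)/(1-9q+27q^2-32q^3+13q^4-3q^5-q^6). -/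
open RatFunc
set_option maxHeartbeats 1000000

private lemma hx' : (1 - X : RatFunc ℚ) ≠ 0 := by
  have h : (1 - X : RatFunc ℚ)
      = algebraMap (Polynomial ℚ) (RatFunc ℚ) (1 - Polynomial.X) := by
    simp
  rw [h]
  apply RatFunc.algebraMap_ne_zero
  intro hc
  have := congrArg (Polynomial.eval 0) hc
  simp at this

private lemma hD' : (1 - 9*X + 27*X^2 - 32*X^3 + 13*X^4 - 3*X^5 - X^6 : RatFunc ℚ) ≠ 0 := by
  have h : (1 - 9*X + 27*X^2 - 32*X^3 + 13*X^4 - 3*X^5 - X^6 : RatFunc ℚ)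
      = algebraMap (Polynomial ℚ) (RatFunc ℚ)
        (1 - 9*Polynomial.X + 27*Polynomial.X^2 - 32*Polynomial.X^3
          + 13*Polynomial.X^4 - 3*Polynomial.X^5 - Polynomial.X^6) := by
    simp [map_ofNat]
  rw [h]
  apply RatFunc.algebraMap_ne_zero
  intro hc
  have := congrArg (Polynomial.eval 0) hc
  simp at this

set_option maxRecDepth 16000 in
set_option maxHeartbeats 8000000 in
private lemma sat1 : (X * (1 - 6*X + 11*X^2 - 6*X^3 + 2*X^4) /
          (1 - 9*X + 27*X^2 - 32*X^3 + 13*X^4 - 3*X^5 - X^6) : RatFunc ℚ) = X/(1-X) + X/(1-X)^2 * (X * (1 - 6*X + 11*X^2 - 6*X^3 + 2*X^4) /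
          (1 - 9*X + 27*X^2 - 32*X^3 + 13*X^4 - 3*X^5 - X^6)) + X/(1-X) * (X * (1 - 5*X + 7*X^2 - 2*X^4 + X^5) /
          (1 - 9*X + 27*X^2 - 32*X^3 + 13*X^4 - 3*X^5 - X^6)) + X^2/(1-X)^2 * ((X * (1 - 5*X + 7*X^2 - 2*X^4 + X^5) /
          (1 - 9*X + 27*X^2 - 32*X^3 + 13*X^4 - 3*X^5 - X^6)) - (X * (1 - 6*X + 11*X^2 - 6*X^3 + 2*X^4) /
          (1 - 9*X + 27*X^2 - 32*X^3 + 13*X^4 - 3*X^5 - X^6))) + X^2/(1-X)^2 * (X^2 * (1 - 3*X + X^3 - X^4) /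
          (1 - 9*X + 27*X^2 - 32*X^3 + 13*X^4 - 3*X^5 - X^6)) := by
  have hinv : (1-X) * (1-X)⁻¹ = (1 : RatFunc ℚ) := mul_inv_cancel₀ hx'
  have hDinv : (1 - 9*X + 27*X^2 - 32*X^3 + 13*X^4 - 3*X^5 - X^6 : RatFunc ℚ)
      * (1 - 9*X + 27*X^2 - 32*X^3 + 13*X^4 - 3*X^5 - X^6 : RatFunc ℚ)⁻¹ = 1 :=
    mul_inv_cancel₀ hD'
  refine mul_right_cancel₀ (mul_ne_zero (pow_ne_zero 3 hx') hD') ?_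
  simp only [div_eq_mul_inv, ← inv_pow]
  linear_combination ((-1)*X + 9*X^2 + (-1)*X^2*(1-X)⁻¹ + (-32)*X^3 + 8*X^3*(1-X)⁻¹ + 58*X^4 + (-26)*X^4*(1-X)⁻¹ + (-59)*X^5 + 45*X^5*(1-X)⁻¹ + 35*X^6 + (-47)*X^6*(1-X)⁻¹ + (-12)*X^7 + 32*X^7*(1-X)⁻¹ + 2*X^8 + (-14)*X^8*(1-X)⁻¹ + 3*X^9*(1-X)⁻¹) * hinv + (X + (-9)*X^2 + (-1)*X^2*(1-X)⁻¹ + (-1)*X^2*(1-X)⁻¹^2 + 32*X^3 + 8*X^3*(1-X)⁻¹ + 9*X^3*(1-X)⁻¹^2 + (-58)*X^4 + (-25)*X^4*(1-X)⁻¹ + (-34)*X^4*(1-X)⁻¹^2 + 59*X^5 + 37*X^5*(1-X)⁻¹ + 71*X^5*(1-X)⁻¹^2 + (-35)*X^6 + (-24)*X^6*(1-X)⁻¹ + (-92)*X^6*(1-X)⁻¹^2 + 12*X^7 + 79*X^7*(1-X)⁻¹^2 + (-2)*X^8 + 9*X^8*(1-X)⁻¹ + (-46)*X^8*(1-X)⁻¹^2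 + (-5)*X^9*(1-X)⁻¹ + 17*X^9*(1-X)⁻¹^2 + X^10*(1-X)⁻¹ + (-3)*X^10*(1-X)⁻¹^2) * hDinv

set_option maxRecDepth 16000 in
set_option maxHeartbeats 8000000 in
private lemma sat2 : (X * (1 - 5*X + 7*X^2 - 2*X^4 + X^5) /
          (1 - 9*X + 27*X^2 - 32*X^3 + 13*X^4 - 3*X^5 - X^6) : RatFunc ℚ) = X/(1-X) + X^2/(1-X)^2 + X/(1-X)^2 * (X * (1 - 6*X + 11*X^2 - 6*X^3 + 2*X^4) /
          (1 - 9*X + 27*X^2 - 32*X^3 + 13*X^4 - 3*X^5 - X^6)) + 2*X^2/(1-X)^3 * (X * (1 - 6*X + 11*X^2 - 6*X^3 + 2*X^4) /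
          (1 - 9*X + 27*X^2 - 32*X^3 + 13*X^4 - 3*X^5 - X^6)) + X/(1-X) * (X * (1 - 5*X + 7*X^2 - 2*X^4 + X^5) /
          (1 - 9*X + 27*X^2 - 32*X^3 + 13*X^4 - 3*X^5 - X^6)) + X^2/(1-X)^2 * (X * (1 - 5*X + 7*X^2 - 2*X^4 + X^5) /
          (1 - 9*X + 27*X^2 - 32*X^3 + 13*X^4 - 3*X^5 - X^6)) + 3*X^2/(1-X)^2 * ((X * (1 - 5*X + 7*X^2 - 2*X^4 + X^5) /
          (1 - 9*X + 27*X^2 - 32*X^3 + 13*X^4 - 3*X^5 - X^6)) - (X * (1 - 6*X + 11*X^2 - 6*X^3 + 2*X^4) /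
          (1 - 9*X + 27*X^2 - 32*X^3 + 13*X^4 - 3*X^5 - X^6))) + 2*X^3/(1-X)^3 * ((X * (1 - 5*X + 7*X^2 - 2*X^4 + X^5) /
          (1 - 9*X + 27*X^2 - 32*X^3 + 13*X^4 - 3*X^5 - X^6)) - (X * (1 - 6*X + 11*X^2 - 6*X^3 + 2*X^4) /
          (1 - 9*X + 27*X^2 - 32*X^3 + 13*X^4 - 3*X^5 - X^6))) + 2*X^2/(1-X)^2 * (X^2 * (1 - 3*X + X^3 - X^4) /
          (1 - 9*X + 27*X^2 - 32*X^3 + 13*X^4 - 3*X^5 - X^6)) + 2*X^3/(1-X)^3 * (X^2 * (1 - 3*X + X^3 - X^4) /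
          (1 - 9*X + 27*X^2 - 32*X^3 + 13*X^4 - 3*X^5 - X^6)) := by
  have hinv : (1-X) * (1-X)⁻¹ = (1 : RatFunc ℚ) := mul_inv_cancel₀ hx'
  have hDinv : (1 - 9*X + 27*X^2 - 32*X^3 + 13*X^4 - 3*X^5 - X^6 : RatFunc ℚ)
      * (1 - 9*X + 27*X^2 - 32*X^3 + 13*X^4 - 3*X^5 - X^6 : RatFunc ℚ)⁻¹ = 1 :=
    mul_inv_cancel₀ hD'
  refine mul_right_cancel₀ (mul_ne_zero (pow_ne_zero 3 hx') hD') ?_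
  simp only [div_eq_mul_inv, ← inv_pow]
  linear_combination ((-1)*X + 8*X^2 + (-2)*X^2*(1-X)⁻¹ + (-25)*X^3 + 16*X^3*(1-X)⁻¹ + (-2)*X^3*(1-X)⁻¹^2 + 37*X^4 + (-54)*X^4*(1-X)⁻¹ + 16*X^4*(1-X)⁻¹^2 + (-24)*X^5 + 101*X^5*(1-X)⁻¹ + (-52)*X^5*(1-X)⁻¹^2 + (-117)*X^6*(1-X)⁻¹ + 90*X^6*(1-X)⁻¹^2 + 9*X^7 + 88*X^7*(1-X)⁻¹ + (-94)*X^7*(1-X)⁻¹^2 + (-5)*X^8 + (-42)*X^8*(1-X)⁻¹ + 64*X^8*(1-X)⁻¹^2 + X^9 + 11*X^9*(1-X)⁻¹ + (-28)*X^9*(1-X)⁻¹^2 + (-1)*X^10*(1-X)⁻¹ + 6*X^10*(1-X)⁻¹^2) * hinv + (X + (-8)*X^2 + (-1)*X^2*(1-X)⁻¹ + (-1)*X^2*(1-X)⁻¹^2 + 25*X^3 + 8*X^3*(1-X)⁻¹ + 8*X^3*(1-X)⁻¹^2 + (-2)*X^3*(1-X)⁻¹^3 + (-37)*X^4 + (-25)*X^4*(1-X)⁻¹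 + (-29)*X^4*(1-X)⁻¹^2 + 18*X^4*(1-X)⁻¹^3 + 24*X^5 + 37*X^5*(1-X)⁻¹ + 66*X^5*(1-X)⁻¹^2 + (-68)*X^5*(1-X)⁻¹^3 + (-24)*X^6*(1-X)⁻¹ + (-109)*X^6*(1-X)⁻¹^2 + 142*X^6*(1-X)⁻¹^3 + (-9)*X^7 + 134*X^7*(1-X)⁻¹^2 + (-184)*X^7*(1-X)⁻¹^3 + 5*X^8 + 9*X^8*(1-X)⁻¹ + (-115)*X^8*(1-X)⁻¹^2 + 158*X^8*(1-X)⁻¹^3 + (-1)*X^9 + (-5)*X^9*(1-X)⁻¹ + 62*X^9*(1-X)⁻¹^2 + (-92)*X^9*(1-X)⁻¹^3 + X^10*(1-X)⁻¹ + (-18)*X^10*(1-X)⁻¹^2 + 34*X^10*(1-X)⁻¹^3 + 2*X^11*(1-X)⁻¹^2 + (-6)*X^11*(1-X)⁻¹^3) * hDinv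

set_option maxRecDepth 16000 in
set_option maxHeartbeats 8000000 in
private lemma sat3 : (X^2 * (1 - 3*X + X^3 - X^4) /
          (1 - 9*X + 27*X^2 - 32*X^3 + 13*X^4 - 3*X^5 - X^6) : RatFunc ℚ) = X^2/(1-X)^2 + 2*X^2/(1-X)^2 * (X * (1 - 6*X + 11*X^2 - 6*X^3 + 2*X^4) /
          (1 - 9*X + 27*X^2 - 32*X^3 + 13*X^4 - 3*X^5 - X^6)) + 2*X^2/(1-X)^3 * (X * (1 - 6*X + 11*X^2 - 6*X^3 + 2*X^4) /
          (1 - 9*X + 27*X^2 - 32*X^3 + 13*X^4 - 3*X^5 - X^6)) + 2*X^2/(1-X)^2 * (X^2 * (1 - 3*X + X^3 - X^4) /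
          (1 - 9*X + 27*X^2 - 32*X^3 + 13*X^4 - 3*X^5 - X^6)) + 2*X^3/(1-X)^3 * (X^2 * (1 - 3*X + X^3 - X^4) /
          (1 - 9*X + 27*X^2 - 32*X^3 + 13*X^4 - 3*X^5 - X^6)) := by
  have hinv : (1-X) * (1-X)⁻¹ = (1 : RatFunc ℚ) := mul_inv_cancel₀ hx'
  have hDinv : (1 - 9*X + 27*X^2 - 32*X^3 + 13*X^4 - 3*X^5 - X^6 : RatFunc ℚ)
      * (1 - 9*X + 27*X^2 - 32*X^3 + 13*X^4 - 3*X^5 - X^6 : RatFunc ℚ)⁻¹ = 1 :=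
    mul_inv_cancel₀ hD'
  refine mul_right_cancel₀ (mul_ne_zero (pow_ne_zero 3 hx') hD') ?_
  simp only [div_eq_mul_inv, ← inv_pow]
  linear_combination ((-1)*X^2 + (-1)*X^2*(1-X)⁻¹ + 6*X^3 + 7*X^3*(1-X)⁻¹ + (-2)*X^3*(1-X)⁻¹^2 + (-12)*X^4 + (-18)*X^4*(1-X)⁻¹ + 16*X^4*(1-X)⁻¹^2 + 9*X^5 + 21*X^5*(1-X)⁻¹ + (-50)*X^5*(1-X)⁻¹^2 + X^6 + (-8)*X^6*(1-X)⁻¹ + 78*X^6*(1-X)⁻¹^2 + (-6)*X^7 + (-7)*X^7*(1-X)⁻¹ + (-64)*X^7*(1-X)⁻¹^2 + 4*X^8 + 10*X^8*(1-X)⁻¹ + 24*X^8*(1-X)⁻¹^2 + (-1)*X^9 + (-5)*X^9*(1-X)⁻¹ + 2*X^9*(1-X)⁻¹^2 + X^10*(1-X)⁻¹ + (-6)*X^10*(1-X)⁻¹^2 + 2*X^11*(1-X)⁻¹^2) * hinv + (X^2 + (-6)*X^3 + (-2)*X^3*(1-X)⁻¹^2 + (-2)*X^3*(1-X)⁻¹^3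 + 12*X^4 + 16*X^4*(1-X)⁻¹^2 + 18*X^4*(1-X)⁻¹^3 + (-9)*X^5 + (-52)*X^5*(1-X)⁻¹^2 + (-66)*X^5*(1-X)⁻¹^3 + (-1)*X^6 + 92*X^6*(1-X)⁻¹^2 + 128*X^6*(1-X)⁻¹^3 + 6*X^7 + (-100)*X^7*(1-X)⁻¹^2 + (-142)*X^7*(1-X)⁻¹^3 + (-4)*X^8 + 72*X^8*(1-X)⁻¹^2 + 88*X^8*(1-X)⁻¹^3 + X^9 + (-36)*X^9*(1-X)⁻¹^2 + (-22)*X^9*(1-X)⁻¹^3 + 12*X^10*(1-X)⁻¹^2 + (-8)*X^10*(1-X)⁻¹^3 + (-2)*X^11*(1-X)⁻¹^2 + 8*X^11*(1-X)⁻¹^3 + (-2)*X^12*(1-X)⁻¹^3) * hDinv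

set_option maxRecDepth 16000 in
set_option maxHeartbeats 8000000 in
private lemma solve_sys (E F G : RatFunc ℚ)
    (h1 : E = X/(1-X) + X/(1-X)^2 * E + X/(1-X) * F + X^2/(1-X)^2 * (F-E)
            + X^2/(1-X)^2 * G)
    (h2 : F = X/(1-X) + X^2/(1-X)^2 + X/(1-X)^2 * E + 2*X^2/(1-X)^3 * E
            + X/(1-X) * F + X^2/(1-X)^2 * F + 3*X^2/(1-X)^2 * (F-E)
            + 2*X^3/(1-X)^3 * (F-E) + 2*X^2/(1-X)^2 * G + 2*X^3/(1-X)^3 * G)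
    (h3 : G = X^2/(1-X)^2 + 2*X^2/(1-X)^2 * E + 2*X^2/(1-X)^3 * E
            + 2*X^2/(1-X)^2 * G + 2*X^3/(1-X)^3 * G) :
    E = X * (1 - 6*X + 11*X^2 - 6*X^3 + 2*X^4) /
          (1 - 9*X + 27*X^2 - 32*X^3 + 13*X^4 - 3*X^5 - X^6) ∧
    F = X * (1 - 5*X + 7*X^2 - 2*X^4 + X^5) /
          (1 - 9*X + 27*X^2 - 32*X^3 + 13*X^4 - 3*X^5 - X^6) ∧
    G = X^2 * (1 - 3*X + X^3 - X^4) /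
          (1 - 9*X + 27*X^2 - 32*X^3 + 13*X^4 - 3*X^5 - X^6) := by
  have hinv : (1-X) * (1-X)⁻¹ = (1 : RatFunc ℚ) := mul_inv_cancel₀ hx'
  simp only [div_eq_mul_inv, ← inv_pow] at h1 h2 h3
  refine ⟨?_, ?_, ?_⟩
  · rw [eq_div_iff hD']
    linear_combination ((1-X)⁻¹ + (-9)*X*(1-X)⁻¹ + 29*X^2*(1-X)⁻¹ + (-43)*X^3*(1-X)⁻¹ + 35*X^4*(1-X)⁻¹ + (-19)*X^5*(1-X)⁻¹ + 7*X^6*(1-X)⁻¹ + (-1)*X^7*(1-X)⁻¹) * h1 + (X*(1-X)⁻¹ + (-6)*X^2*(1-X)⁻¹ + 13*X^3*(1-X)⁻¹ + (-14)*X^4*(1-X)⁻¹ + 9*X^5*(1-X)⁻¹ + (-4)*X^6*(1-X)⁻¹ + X^7*(1-X)⁻¹) * h2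
      + (X^2*(1-X)⁻¹ + (-5)*X^3*(1-X)⁻¹ + 10*X^4*(1-X)⁻¹ + (-10)*X^5*(1-X)⁻¹ + 5*X^6*(1-X)⁻¹ + (-1)*X^7*(1-X)⁻¹) * h3 + (X + X*(1-X)⁻¹ + (-6)*X^2 + (-7)*X^2*(1-X)⁻¹ + 11*X^3 + 17*X^3*(1-X)⁻¹ + X^3*(1-X)⁻¹^2 + (-6)*X^4 + (-17)*X^4*(1-X)⁻¹ + (-4)*X^4*(1-X)⁻¹^2 + 2*X^5 + 8*X^5*(1-X)⁻¹ + 4*X^5*(1-X)⁻¹^2 + (-2)*X^6*(1-X)⁻¹ + (-1)*X^7*(1-X)⁻¹^2 + G*X^2*(1-X)⁻¹ + G*X^2*(1-X)⁻¹^2 + (-5)*G*X^3*(1-X)⁻¹ + (-6)*G*X^3*(1-X)⁻¹^2 + 10*G*X^4*(1-X)⁻¹ + 15*G*X^4*(1-X)⁻¹^2 + 2*G*X^4*(1-X)⁻¹^3 + (-10)*G*X^5*(1-X)⁻¹ + (-20)*G*X^5*(1-X)⁻¹^2 + (-8)*G*X^5*(1-X)⁻¹^3 + 5*G*X^6*(1-X)⁻¹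 + 15*G*X^6*(1-X)⁻¹^2 + 8*G*X^6*(1-X)⁻¹^3 + (-1)*G*X^7*(1-X)⁻¹ + (-6)*G*X^7*(1-X)⁻¹^2 + G*X^8*(1-X)⁻¹^2 + (-2)*G*X^8*(1-X)⁻¹^3 + F*X*(1-X)⁻¹ + (-6)*F*X^2*(1-X)⁻¹ + F*X^2*(1-X)⁻¹^2 + 13*F*X^3*(1-X)⁻¹ + (-4)*F*X^3*(1-X)⁻¹^2 + (-14)*F*X^4*(1-X)⁻¹ + 3*F*X^4*(1-X)⁻¹^2 + 2*F*X^4*(1-X)⁻¹^3 + 9*F*X^5*(1-X)⁻¹ + 2*F*X^5*(1-X)⁻¹^2 + (-10)*F*X^5*(1-X)⁻¹^3 + (-4)*F*X^6*(1-X)⁻¹ + (-3)*F*X^6*(1-X)⁻¹^2 + 16*F*X^6*(1-X)⁻¹^3 + F*X^7*(1-X)⁻¹ + 2*F*X^7*(1-X)⁻¹^2 + (-12)*F*X^7*(1-X)⁻¹^3 + (-1)*F*X^8*(1-X)⁻¹^2 + 6*F*X^8*(1-X)⁻¹^3 + (-2)*F*X^9*(1-X)⁻¹^3 + (-1)*E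 + 9*E*X + E*X*(1-X)⁻¹ + E*X*(1-X)⁻¹^2 + (-27)*E*X^2 + (-7)*E*X^2*(1-X)⁻¹ + (-8)*E*X^2*(1-X)⁻¹^2 + 32*E*X^3 + 16*E*X^3*(1-X)⁻¹ + 23*E*X^3*(1-X)⁻¹^2 + 2*E*X^3*(1-X)⁻¹^3 + (-13)*E*X^4 + (-10)*E*X^4*(1-X)⁻¹ + (-26)*E*X^4*(1-X)⁻¹^2 + (-10)*E*X^4*(1-X)⁻¹^3 + 3*E*X^5 + (-3)*E*X^5*(1-X)⁻¹ + 7*E*X^5*(1-X)⁻¹^2 + 18*E*X^5*(1-X)⁻¹^3 + E*X^6 + 5*E*X^6*(1-X)⁻¹ + 8*E*X^6*(1-X)⁻¹^2 + (-16)*E*X^6*(1-X)⁻¹^3 + (-2)*E*X^7*(1-X)⁻¹ + (-7)*E*X^7*(1-X)⁻¹^2 + 10*E*X^7*(1-X)⁻¹^3 + 2*E*X^8*(1-X)⁻¹^2 + (-6)*E*X^8*(1-X)⁻¹^3 + 2*E*X^9*(1-X)⁻¹^3) * hinv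
  · rw [eq_div_iff hD']
    linear_combination (X*(1-X)⁻¹ + (-7)*X^2*(1-X)⁻¹ + 19*X^3*(1-X)⁻¹ + (-19)*X^4*(1-X)⁻¹ + 3*X^5*(1-X)⁻¹ + 3*X^6*(1-X)⁻¹ + X^7*(1-X)⁻¹ + (-1)*X^8*(1-X)⁻¹) * h1 + ((1-X)⁻¹ + (-9)*X*(1-X)⁻¹ + 33*X^2*(1-X)⁻¹ + (-65)*X^3*(1-X)⁻¹ + 73*X^4*(1-X)⁻¹ + (-45)*X^5*(1-X)⁻¹ + 13*X^6*(1-X)⁻¹ + (-1)*X^7*(1-X)⁻¹) * h2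
      + (2*X^2*(1-X)⁻¹ + (-11)*X^3*(1-X)⁻¹ + 23*X^4*(1-X)⁻¹ + (-22)*X^5*(1-X)⁻¹ + 8*X^6*(1-X)⁻¹ + X^7*(1-X)⁻¹ + (-1)*X^8*(1-X)⁻¹) * h3 + (X + X*(1-X)⁻¹ + (-5)*X^2 + (-6)*X^2*(1-X)⁻¹ + X^2*(1-X)⁻¹^2 + 7*X^3 + 12*X^3*(1-X)⁻¹ + (-8)*X^3*(1-X)⁻¹^2 + (-7)*X^4*(1-X)⁻¹ + 27*X^4*(1-X)⁻¹^2 + (-2)*X^5 + (-2)*X^5*(1-X)⁻¹ + (-49)*X^5*(1-X)⁻¹^2 + X^6 + 3*X^6*(1-X)⁻¹ + 47*X^6*(1-X)⁻¹^2 + (-1)*X^7*(1-X)⁻¹ + (-20)*X^7*(1-X)⁻¹^2 + X^8*(1-X)⁻¹^2 + X^9*(1-X)⁻¹^2 + 2*G*X^2*(1-X)⁻¹ + 2*G*X^2*(1-X)⁻¹^2 + (-11)*G*X^3*(1-X)⁻¹ + (-13)*G*X^3*(1-X)⁻¹^2 + 2*G*X^3*(1-X)⁻¹^3 + 23*G*X^4*(1-X)⁻¹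 + 34*G*X^4*(1-X)⁻¹^2 + (-16)*G*X^4*(1-X)⁻¹^3 + (-22)*G*X^5*(1-X)⁻¹ + (-45)*G*X^5*(1-X)⁻¹^2 + 54*G*X^5*(1-X)⁻¹^3 + 8*G*X^6*(1-X)⁻¹ + 30*G*X^6*(1-X)⁻¹^2 + (-98)*G*X^6*(1-X)⁻¹^3 + G*X^7*(1-X)⁻¹ + (-7)*G*X^7*(1-X)⁻¹^2 + 94*G*X^7*(1-X)⁻¹^3 + (-1)*G*X^8*(1-X)⁻¹ + (-2)*G*X^8*(1-X)⁻¹^2 + (-40)*G*X^8*(1-X)⁻¹^3 + G*X^9*(1-X)⁻¹^2 + 2*G*X^9*(1-X)⁻¹^3 + 2*G*X^10*(1-X)⁻¹^3 + (-1)*F + 9*F*X + F*X*(1-X)⁻¹ + (-27)*F*X^2 + (-3)*F*X^2*(1-X)⁻¹ + 4*F*X^2*(1-X)⁻¹^2 + 32*F*X^3 + (-6)*F*X^3*(1-X)⁻¹ + (-29)*F*X^3*(1-X)⁻¹^2 + 2*F*X^3*(1-X)⁻¹^3 + (-13)*F*X^4 + 28*F*X^4*(1-X)⁻¹ + 80*F*X^4*(1-X)⁻¹^2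 + (-16)*F*X^4*(1-X)⁻¹^3 + 3*F*X^5 + (-29)*F*X^5*(1-X)⁻¹ + (-111)*F*X^5*(1-X)⁻¹^2 + 50*F*X^5*(1-X)⁻¹^3 + F*X^6 + 11*F*X^6*(1-X)⁻¹ + 82*F*X^6*(1-X)⁻¹^2 + (-80)*F*X^6*(1-X)⁻¹^3 + (-2)*F*X^7*(1-X)⁻¹ + (-29)*F*X^7*(1-X)⁻¹^2 + 66*F*X^7*(1-X)⁻¹^3 + 2*F*X^8*(1-X)⁻¹^2 + (-24)*F*X^8*(1-X)⁻¹^3 + F*X^9*(1-X)⁻¹^2 + 2*F*X^9*(1-X)⁻¹^3 + E*X*(1-X)⁻¹ + E*X*(1-X)⁻¹^2 + (-7)*E*X^2*(1-X)⁻¹ + (-8)*E*X^2*(1-X)⁻¹^2 + 2*E*X^2*(1-X)⁻¹^3 + 19*E*X^3*(1-X)⁻¹ + 26*E*X^3*(1-X)⁻¹^2 + (-18)*E*X^3*(1-X)⁻¹^3 + (-19)*E*X^4*(1-X)⁻¹ + (-38)*E*X^4*(1-X)⁻¹^2 + 70*E*X^4*(1-X)⁻¹^3 + 3*E*X^5*(1-X)⁻¹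 + 22*E*X^5*(1-X)⁻¹^2 + (-148)*E*X^5*(1-X)⁻¹^3 + 3*E*X^6*(1-X)⁻¹ + 174*E*X^6*(1-X)⁻¹^3 + E*X^7*(1-X)⁻¹ + (-2)*E*X^7*(1-X)⁻¹^2 + (-106)*E*X^7*(1-X)⁻¹^3 + (-1)*E*X^8*(1-X)⁻¹ + (-2)*E*X^8*(1-X)⁻¹^2 + 26*E*X^8*(1-X)⁻¹^3 + E*X^9*(1-X)⁻¹^2) * hinv
  · rw [eq_div_iff hD']
    linear_combination (4*X^2*(1-X)⁻¹ + (-26)*X^3*(1-X)⁻¹ + 52*X^4*(1-X)⁻¹ + (-44)*X^5*(1-X)⁻¹ + 16*X^6*(1-X)⁻¹ + (-2)*X^7*(1-X)⁻¹) * h1 + (4*X^3*(1-X)⁻¹ + (-14)*X^4*(1-X)⁻¹ + 18*X^5*(1-X)⁻¹ + (-10)*X^6*(1-X)⁻¹ + 2*X^7*(1-X)⁻¹) * h2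
      + ((1-X)⁻¹ + (-10)*X*(1-X)⁻¹ + 38*X^2*(1-X)⁻¹ + (-73)*X^3*(1-X)⁻¹ + 77*X^4*(1-X)⁻¹ + (-44)*X^5*(1-X)⁻¹ + 12*X^6*(1-X)⁻¹ + (-1)*X^7*(1-X)⁻¹) * h3 + (X^2 + X^2*(1-X)⁻¹ + X^2*(1-X)⁻¹^2 + (-3)*X^3 + (-4)*X^3*(1-X)⁻¹ + (-9)*X^3*(1-X)⁻¹^2 + 3*X^4*(1-X)⁻¹ + 29*X^4*(1-X)⁻¹^2 + X^5 + X^5*(1-X)⁻¹ + (-40)*X^5*(1-X)⁻¹^2 + (-1)*X^6 + (-2)*X^6*(1-X)⁻¹ + 23*X^6*(1-X)⁻¹^2 + X^7*(1-X)⁻¹ + (-3)*X^7*(1-X)⁻¹^2 + (-1)*X^8*(1-X)⁻¹^2 + (-1)*G + 9*G*X + (-27)*G*X^2 + 2*G*X^2*(1-X)⁻¹ + 2*G*X^2*(1-X)⁻¹^2 + 32*G*X^3 + (-14)*G*X^3*(1-X)⁻¹ + (-16)*G*X^3*(1-X)⁻¹^2 + 2*G*X^3*(1-X)⁻¹^3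 + (-13)*G*X^4 + 32*G*X^4*(1-X)⁻¹ + 46*G*X^4*(1-X)⁻¹^2 + (-18)*G*X^4*(1-X)⁻¹^3 + 3*G*X^5 + (-28)*G*X^5*(1-X)⁻¹ + (-60)*G*X^5*(1-X)⁻¹^2 + 58*G*X^5*(1-X)⁻¹^3 + G*X^6 + 10*G*X^6*(1-X)⁻¹ + 38*G*X^6*(1-X)⁻¹^2 + (-80)*G*X^6*(1-X)⁻¹^3 + (-2)*G*X^7*(1-X)⁻¹ + (-12)*G*X^7*(1-X)⁻¹^2 + 46*G*X^7*(1-X)⁻¹^3 + 2*G*X^8*(1-X)⁻¹^2 + (-6)*G*X^8*(1-X)⁻¹^3 + (-2)*G*X^9*(1-X)⁻¹^3 + 4*F*X^3*(1-X)⁻¹ + (-14)*F*X^4*(1-X)⁻¹ + 4*F*X^4*(1-X)⁻¹^2 + 18*F*X^5*(1-X)⁻¹ + (-6)*F*X^5*(1-X)⁻¹^2 + (-10)*F*X^6*(1-X)⁻¹ + (-2)*F*X^6*(1-X)⁻¹^2 + 8*F*X^6*(1-X)⁻¹^3 + 2*F*X^7*(1-X)⁻¹ + 6*F*X^7*(1-X)⁻¹^2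 + (-20)*F*X^7*(1-X)⁻¹^3 + (-2)*F*X^8*(1-X)⁻¹^2 + 16*F*X^8*(1-X)⁻¹^3 + (-4)*F*X^9*(1-X)⁻¹^3 + 4*E*X^2*(1-X)⁻¹ + 4*E*X^2*(1-X)⁻¹^2 + 2*E*X^2*(1-X)⁻¹^3 + (-26)*E*X^3*(1-X)⁻¹ + (-30)*E*X^3*(1-X)⁻¹^2 + (-18)*E*X^3*(1-X)⁻¹^3 + 52*E*X^4*(1-X)⁻¹ + 78*E*X^4*(1-X)⁻¹^2 + 58*E*X^4*(1-X)⁻¹^3 + (-44)*E*X^5*(1-X)⁻¹ + (-96)*E*X^5*(1-X)⁻¹^2 + (-80)*E*X^5*(1-X)⁻¹^3 + 16*E*X^6*(1-X)⁻¹ + 60*E*X^6*(1-X)⁻¹^2 + 38*E*X^6*(1-X)⁻¹^3 + (-2)*E*X^7*(1-X)⁻¹ + (-18)*E*X^7*(1-X)⁻¹^2 + 14*E*X^7*(1-X)⁻¹^3 + 2*E*X^8*(1-X)⁻¹^2 + (-18)*E*X^8*(1-X)⁻¹^3 + 4*E*X^9*(1-X)⁻¹^3) * hinv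

/-- The Temperley-style linear system for level one polyominoes with cheesy
blocks has a unique solution `(E, F, G)` in `ℚ(q)`, and its `E`-component is
`q(1-6q+11q²-6q³+2q⁴)/(1-9q+27q²-32q³+13q⁴-3q⁵-q⁶)`. -/
theorem level_one_system_unique_solution :
    (∃! p : RatFunc ℚ × RatFunc ℚ × RatFunc ℚ,
      (fun (E F G : RatFunc ℚ) (q : RatFunc ℚ) =>
        E = q/(1-q) + q/(1-q)^2 * E + q/(1-q) * F + q^2/(1-q)^2 * (F-E)
            + q^2/(1-q)^2 * G ∧
        F = q/(1-q) + q^2/(1-q)^2 + q/(1-q)^2 * E + 2*q^2/(1-q)^3 * E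
            + q/(1-q) * F + q^2/(1-q)^2 * F + 3*q^2/(1-q)^2 * (F-E)
            + 2*q^3/(1-q)^3 * (F-E) + 2*q^2/(1-q)^2 * G + 2*q^3/(1-q)^3 * G ∧
        G = q^2/(1-q)^2 + 2*q^2/(1-q)^2 * E + 2*q^2/(1-q)^3 * E
            + 2*q^2/(1-q)^2 * G + 2*q^3/(1-q)^3 * G)
        p.1 p.2.1 p.2.2 RatFunc.X) ∧
    (∀ E F G : RatFunc ℚ,
      (E = X/(1-X) + X/(1-X)^2 * E + X/(1-X) * F + X^2/(1-X)^2 * (F-E)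
            + X^2/(1-X)^2 * G ∧
       F = X/(1-X) + X^2/(1-X)^2 + X/(1-X)^2 * E + 2*X^2/(1-X)^3 * E
            + X/(1-X) * F + X^2/(1-X)^2 * F + 3*X^2/(1-X)^2 * (F-E)
            + 2*X^3/(1-X)^3 * (F-E) + 2*X^2/(1-X)^2 * G + 2*X^3/(1-X)^3 * G ∧
       G = X^2/(1-X)^2 + 2*X^2/(1-X)^2 * E + 2*X^2/(1-X)^3 * E
            + 2*X^2/(1-X)^2 * G + 2*X^3/(1-X)^3 * G) →
      E = X * (1 - 6*X + 11*X^2 - 6*X^3 + 2*X^4) /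
            (1 - 9*X + 27*X^2 - 32*X^3 + 13*X^4 - 3*X^5 - X^6)) := by
  constructor
  · refine ⟨(X * (1 - 6*X + 11*X^2 - 6*X^3 + 2*X^4) /
          (1 - 9*X + 27*X^2 - 32*X^3 + 13*X^4 - 3*X^5 - X^6),
        X * (1 - 5*X + 7*X^2 - 2*X^4 + X^5) /
          (1 - 9*X + 27*X^2 - 32*X^3 + 13*X^4 - 3*X^5 - X^6),
        X^2 * (1 - 3*X + X^3 - X^4) /
          (1 - 9*X + 27*X^2 - 32*X^3 + 13*X^4 - 3*X^5 - X^6)), ⟨sat1, sat2, sat3⟩, ?_⟩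
    rintro ⟨a, b, c⟩ ⟨k1, k2, k3⟩
    obtain ⟨r1, r2, r3⟩ := solve_sys a b c k1 k2 k3
    simp only [Prod.mk.injEq]
    exact ⟨r1, r2, r3⟩
  · rintro E F G ⟨h1, h2, h3⟩
    exact (solve_sys E F G h1 h2 h3).1
end

section
/- Every complex root r of D(q) = 1 - 9q + 27q² - 32q³ + 13q⁴ - 3q⁵ - q⁶ other than its unique root in the interval (0.2331, 0.2332) satisfies |r| > 0.4. -/
/-!
On the disc `‖q‖ ≤ 0.4`, `D(q)` differs by less than `1.4e-4` from
`-(q - 0.23312) (q² - 0.8998 q + 0.21013) (q² - 1.977 q + 3.3412) (q + 6.11)`, and the last three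
factors stay away from zero there because their roots have moduli above `0.458`. Hence every root
of `D` in the disc lies within `0.004` of `0.23312`. On that small disc `‖D''‖ ≤ 161`, while
`|D'(0.23312)| ≈ 1.02`, so by the mean value inequality `D` is injective there. The intermediate
value theorem gives a real root in `(0.2331, 0.2332)`, which is therefore the only root of `D` of
modulus at most `0.4`.
-/

open Complex ComplexConjugate Metric Set

theorem norm_sum_ofReal_mul_pow_le {𝕜 : Type*} [RCLike 𝕜] {n : ℕ} (c : Fin n → ℝ) {z : 𝕜}
    {R : ℝ} (hz : ‖z‖ ≤ R) : ‖∑ i, (c i : 𝕜) * z ^ (i : ℕ)‖ ≤ ∑ i, |c i| * R ^ (i : ℕ) := by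
  refine (norm_sum_le _ _).trans (Finset.sum_le_sum fun i _ => ?_)
  rw [norm_mul, norm_pow, RCLike.norm_ofReal]
  gcongr

theorem sq_sub_norm_le_norm_quadratic {b c s : ℝ} (hbc : b ^ 2 ≤ 4 * c) (hs : s ^ 2 ≤ c) {z : ℂ}
    (hz : ‖z‖ ≤ s) : (s - ‖z‖) ^ 2 ≤ ‖z ^ 2 - b * z + c‖ := by
  set ρ : ℂ := ⟨b / 2, √(c - b ^ 2 / 4)⟩
  have hρ : ‖ρ‖ ^ 2 = c := by
    rw [Complex.sq_norm, Complex.normSq_mk, ← sq, ← sq, Real.sq_sqrt (by linarith)]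
    ring
  have hsum : ρ + conj ρ = b := by apply Complex.ext <;> simp [ρ]
  have hprod : ρ * conj ρ = c := by rw [mul_conj, normSq_eq_norm_sq, hρ]
  have hfactor : z ^ 2 - b * z + c = (z - ρ) * (z - conj ρ) := by
    linear_combination z * hsum - hprod
  have hsρ : s ≤ ‖ρ‖ := by nlinarith [norm_nonneg ρ, norm_nonneg z]
  have hdist : ∀ w : ℂ, ‖w‖ = ‖ρ‖ → s - ‖z‖ ≤ ‖z - w‖ := fun w hw => by
    have := norm_sub_norm_le w z
    rw [norm_sub_rev] at this
    linarith
  rw [hfactor, norm_mul, sq]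
  exact mul_le_mul (hdist ρ rfl) (hdist _ (norm_conj ρ)) (by linarith) (norm_nonneg _)

theorem injOn_of_norm_hasDerivAt_sub_le {𝕜 : Type*} [RCLike 𝕜] {f f' : 𝕜 → 𝕜} {s : Set 𝕜}
    (hs : Convex ℝ s) (hf : ∀ x ∈ s, HasDerivAt f (f' x) x) {m : 𝕜} {C : ℝ}
    (hC : ∀ x ∈ s, ‖f' x - m‖ ≤ C) (hCm : C < ‖m‖) : InjOn f s := by
  intro x hx y hy hxy
  have hlip := hs.norm_image_sub_le_of_norm_hasDerivWithin_le (f := fun x => f x - m * x)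
    (fun x hx => ((hf x hx).sub ((hasDerivAt_id x).const_mul m)).hasDerivWithinAt)
    (by simpa using hC) hx hy
  have hlin : f y - m * y - (f x - m * x) = -(m * (y - x)) := by rw [hxy]; ring
  rw [hlin, norm_neg, norm_mul] at hlip
  have hdist : ‖y - x‖ = 0 := by nlinarith [norm_nonneg (y - x)]
  exact (sub_eq_zero.mp (norm_eq_zero.mp hdist)).symm

def levelOneDenom {R : Type*} [Ring R] (q : R) : R :=
  1 - 9 * q + 27 * q ^ 2 - 32 * q ^ 3 + 13 * q ^ 4 - 3 * q ^ 5 - q ^ 6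

def levelOneDenomDeriv {R : Type*} [Ring R] (q : R) : R :=
  -9 + 54 * q - 96 * q ^ 2 + 52 * q ^ 3 - 15 * q ^ 4 - 6 * q ^ 5

@[norm_cast]
theorem ofReal_levelOneDenom (x : ℝ) : ((levelOneDenom x : ℝ) : ℂ) = levelOneDenom (x : ℂ) := by
  simp [levelOneDenom]

section Derivatives

variable {𝕜 : Type*} [NontriviallyNormedField 𝕜] (z : 𝕜)

theorem hasDerivAt_levelOneDenom : HasDerivAt levelOneDenom (levelOneDenomDeriv z) z := by
  have h := ((((((hasDerivAt_const z (1 : 𝕜)).sub ((hasDerivAt_id z).const_mul 9)).add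
    ((hasDerivAt_pow 2 z).const_mul 27)).sub ((hasDerivAt_pow 3 z).const_mul 32)).add
    ((hasDerivAt_pow 4 z).const_mul 13)).sub ((hasDerivAt_pow 5 z).const_mul 3)).sub
    (hasDerivAt_pow 6 z)
  refine h.congr_deriv ?_
  norm_num [levelOneDenomDeriv]
  ring

theorem hasDerivAt_levelOneDenomDeriv :
    HasDerivAt levelOneDenomDeriv (54 - 192 * z + 156 * z ^ 2 - 60 * z ^ 3 - 30 * z ^ 4) z := by
  have h := (((((hasDerivAt_const z (-9 : 𝕜)).add ((hasDerivAt_id z).const_mul 54)).sub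
    ((hasDerivAt_pow 2 z).const_mul 96)).add ((hasDerivAt_pow 3 z).const_mul 52)).sub
    ((hasDerivAt_pow 4 z).const_mul 15)).sub ((hasDerivAt_pow 5 z).const_mul 6)
  refine h.congr_deriv ?_
  norm_num
  ring

end Derivatives

theorem norm_levelOneDenom_secondDeriv_le {z : ℂ} (hz : ‖z‖ ≤ 0.4) :
    ‖54 - 192 * z + 156 * z ^ 2 - 60 * z ^ 3 - 30 * z ^ 4‖ ≤ 161 := by
  have h := norm_sum_ofReal_mul_pow_le ![54, -192, 156, -60, -30] hz
  norm_num [Fin.sum_univ_succ] at h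
  refine (congrArg norm ?_).trans_le (h.trans (by norm_num))
  ring

/- The factors are those of `D` over `ℝ` with rounded coefficients: its roots are
`≈ 0.2331166`, `0.4499 ± 0.0878 i`, `0.9885 ± 1.5376 i` and `-6.1099`. -/
theorem levelOneDenom_eq_factor_add (z : ℂ) :
    levelOneDenom z = -(z - 0.23312) * (z ^ 2 - 0.8998 * z + 0.21013) *
        (z ^ 2 - 1.977 * z + 3.3412) * (z + 6.11) +
      (-0.0000259687084992 + 0.000018484170544 * z + 0.00016051375568 * z ^ 2 +
        0.000918399808 * z ^ 3 - 0.000736984 * z ^ 4 + 0.00008 * z ^ 5) := by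
  unfold levelOneDenom
  norm_num
  ring

theorem norm_levelOneDenom_remainder_le {z : ℂ} (hz : ‖z‖ ≤ 0.4) :
    ‖-0.0000259687084992 + 0.000018484170544 * z + 0.00016051375568 * z ^ 2 +
        0.000918399808 * z ^ 3 - 0.000736984 * z ^ 4 + 0.00008 * z ^ 5‖ ≤ 0.00014 := by
  have h := norm_sum_ofReal_mul_pow_le
    ![-0.0000259687084992, 0.000018484170544, 0.00016051375568, 0.000918399808, -0.000736984,
      0.00008] hz
  norm_num [Fin.sum_univ_succ] at h
  refine (congrArg norm ?_).trans_le (h.trans (by norm_num))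
  ring

theorem mem_closedBall_of_levelOneDenom_eq_zero {z : ℂ} (hz : ‖z‖ ≤ 0.4)
    (hroot : levelOneDenom z = 0) : z ∈ closedBall 0.23312 0.004 := by
  have hquad₁ := sq_sub_norm_le_norm_quadratic (b := 0.8998) (c := 0.21013) (s := 0.458)
    (by norm_num) (by norm_num) (hz.trans (by norm_num))
  have hquad₂ := sq_sub_norm_le_norm_quadratic (b := 1.977) (c := 3.3412) (s := 1.82)
    (by norm_num) (by norm_num) (hz.trans (by norm_num))
  have hlin : 6.11 - ‖z‖ ≤ ‖z + 6.11‖ := by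
    have h := norm_sub_norm_le ((6.11 : ℝ) : ℂ) (-z)
    rw [norm_real, norm_neg, sub_neg_eq_add, add_comm] at h
    norm_num at h
    linarith
  push_cast at hquad₁ hquad₂
  rw [levelOneDenom_eq_factor_add, ← eq_neg_iff_add_eq_zero] at hroot
  have hE := norm_levelOneDenom_remainder_le hz
  rw [← norm_neg, ← hroot, norm_mul, norm_mul, norm_mul, norm_neg] at hE
  have hfactors : 0.0387 ≤ ‖z ^ 2 - 0.8998 * z + 0.21013‖ * ‖z ^ 2 - 1.977 * z + 3.3412‖ *
      ‖z + 6.11‖ :=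
    calc (0.0387 : ℝ) ≤ (0.458 - 0.4) ^ 2 * (1.82 - 0.4) ^ 2 * (6.11 - 0.4) := by norm_num
      _ ≤ (0.458 - ‖z‖) ^ 2 * (1.82 - ‖z‖) ^ 2 * (6.11 - ‖z‖) := by gcongr
      _ ≤ _ := by
        gcongr
        linarith
  rw [mem_closedBall, dist_eq_norm]
  nlinarith [mul_le_mul_of_nonneg_left hfactors (norm_nonneg (z - 0.23312))]

theorem injOn_levelOneDenom : InjOn (levelOneDenom : ℂ → ℂ) (closedBall 0.23312 0.004) := by
  have hsmall : ∀ z ∈ closedBall (0.23312 : ℂ) 0.004, ‖z‖ ≤ 0.4 := fun z hz => by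
    have h := norm_le_of_mem_closedBall hz
    rw [← ofReal_ofScientific, norm_real] at h
    norm_num at h
    linarith
  refine injOn_of_norm_hasDerivAt_sub_le (convex_closedBall _ _)
    (fun z _ => hasDerivAt_levelOneDenom z) (m := levelOneDenomDeriv 0.23312)
    (C := 161 * 0.004) (fun z hz => ?_) ?_
  · have h := (convex_closedBall (0.23312 : ℂ) 0.004).norm_image_sub_le_of_norm_hasDerivWithin_le
      (fun w _ => (hasDerivAt_levelOneDenomDeriv w).hasDerivWithinAt)
      (fun w hw => norm_levelOneDenom_secondDeriv_le (hsmall w hw))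
      (mem_closedBall_self (by norm_num)) hz
    rw [mem_closedBall, dist_eq_norm] at hz
    exact h.trans (by gcongr)
  · have h : levelOneDenomDeriv (0.23312 : ℂ) = ((levelOneDenomDeriv (0.23312 : ℝ) : ℝ) : ℂ) := by
      unfold levelOneDenomDeriv
      push_cast
      rfl
    rw [h, norm_real]
    norm_num [levelOneDenomDeriv]

theorem levelOneDenom_roots_subsingleton :
    {z : ℂ | ‖z‖ ≤ 0.4 ∧ levelOneDenom z = 0}.Subsingleton := by
  rintro z ⟨hz, hz₀⟩ w ⟨hw, hw₀⟩
  exact injOn_levelOneDenom (mem_closedBall_of_levelOneDenom_eq_zero hz hz₀)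
    (mem_closedBall_of_levelOneDenom_eq_zero hw hw₀) (hz₀.trans hw₀.symm)

theorem exists_levelOneDenom_eq_zero : ∃ x ∈ Ioo (0.2331 : ℝ) 0.2332, levelOneDenom x = 0 :=
  intermediate_value_Ioo' (by norm_num) (by unfold levelOneDenom; fun_prop)
    ⟨by norm_num [levelOneDenom], by norm_num [levelOneDenom]⟩

/-- The polynomial `D(q) = 1 - 9q + 27q² - 32q³ + 13q⁴ - 3q⁵ - q⁶` has a
unique real root in `(0.2331, 0.2332)`, and every other complex root `r`
satisfies `|r| > 0.4`. -/
theorem level_one_denominator_smallest_root :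
    (∃! x : ℝ, x ∈ Set.Ioo (0.2331 : ℝ) 0.2332 ∧
      1 - 9*x + 27*x^2 - 32*x^3 + 13*x^4 - 3*x^5 - x^6 = 0) ∧
    (∀ r : ℂ, 1 - 9*r + 27*r^2 - 32*r^3 + 13*r^4 - 3*r^5 - r^6 = 0 →
      (r.im ≠ 0 ∨ r.re ∉ Set.Ioo (0.2331 : ℝ) 0.2332) →
      0.4 < ‖r‖) := by
  obtain ⟨α, hα, hαroot⟩ := exists_levelOneDenom_eq_zero
  have hsmall : ∀ x ∈ Ioo (0.2331 : ℝ) 0.2332, ‖(x : ℂ)‖ ≤ 0.4 := fun x hx => by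
    rw [norm_real, Real.norm_eq_abs, abs_le]
    constructor <;> linarith [hx.1, hx.2]
  have heq_α : ∀ z : ℂ, ‖z‖ ≤ 0.4 → levelOneDenom z = 0 → z = α := fun z hz hz₀ =>
    levelOneDenom_roots_subsingleton ⟨hz, hz₀⟩ ⟨hsmall α hα, by exact_mod_cast hαroot⟩
  refine ⟨⟨α, ⟨hα, hαroot⟩, fun y ⟨hy, hy₀⟩ => ?_⟩, fun r hr hr' => ?_⟩
  · exact_mod_cast heq_α y (hsmall y hy) (by exact_mod_cast (hy₀ : levelOneDenom y = 0))
  · by_contra! hle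
    obtain rfl := heq_α r hle hr
    simp [hα] at hr'
end

section
/- The coefficients a(n) = [qⁿ] E₁ of E₁ = q(1-6q+11q²-6q³+2q⁴)/(1-9q+27q²-32q³+13q⁴-3q⁵-q⁶) are nonnegative integers for all n, and satisfy a(n) ≥ 4·a(n-1) for all n ≥ 4. -/
/-!
Clearing the denominator shows that the coefficients `a n` are the integers given by the
recurrence `a (n + 6) = 9 a (n + 5) - 27 a (n + 4) + 32 a (n + 3) - 13 a (n + 2) + 3 a (n + 1) + a n`.
That recurrence has coefficients of both signs, but multiplying its characteristic polynomial by
`X⁴ + 5X³ + 18X² + 56X + 59` gives one for the gaps `a (n + 1) - 4 a n` whose coefficients are all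
nonnegative, plus a positive multiple of `a n`. Nonnegativity of `a` and of the gaps therefore
propagates from the first ten values.
-/

open PowerSeries

theorem PowerSeries.coeff_ofNat_mul {R : Type*} [Semiring R] {a : ℕ} [a.AtLeastTwo] (n : ℕ)
    (φ : R⟦X⟧) : coeff n ((ofNat(a) : R⟦X⟧) * φ) = ofNat(a) * coeff n φ := by
  rw [← map_ofNat C, coeff_C_mul]

namespace LevelOne

noncomputable def numer : ℚ⟦X⟧ := X * (1 - 6*X + 11*X^2 - 6*X^3 + 2*X^4)

noncomputable def denom : ℚ⟦X⟧ := 1 - 9*X + 27*X^2 - 32*X^3 + 13*X^4 - 3*X^5 - X^6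

def seq : ℕ → ℤ
  | 0 => 0 | 1 => 1 | 2 => 3 | 3 => 11 | 4 => 44 | 5 => 184
  | n + 6 => 9 * seq (n + 5) - 27 * seq (n + 4) + 32 * seq (n + 3) - 13 * seq (n + 2)
      + 3 * seq (n + 1) + seq n

theorem seq_add_six (n : ℕ) : seq (n + 6) = 9 * seq (n + 5) - 27 * seq (n + 4)
    + 32 * seq (n + 3) - 13 * seq (n + 2) + 3 * seq (n + 1) + seq n := rfl

theorem constantCoeff_denom_ne_zero : constantCoeff denom ≠ 0 := by
  simp [denom]

theorem mk_seq_mul_denom : mk (fun n ↦ (seq n : ℚ)) * denom = numer := by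
  set f := mk (fun n ↦ (seq n : ℚ))
  have hf : f * denom = f - 9 * (f * X ^ 1) + 27 * (f * X ^ 2) - 32 * (f * X ^ 3)
      + 13 * (f * X ^ 4) - 3 * (f * X ^ 5) - f * X ^ 6 := by
    rw [denom]; ring
  have hnumer : numer = X ^ 1 - 6 * X ^ 2 + 11 * X ^ 3 - 6 * X ^ 4 + 2 * X ^ 5 := by
    rw [numer]; ring
  ext n
  rw [hf, hnumer]
  simp only [map_add, map_sub, coeff_mul_X_pow', coeff_ofNat_mul, coeff_X_pow, coeff_mk, f]
  obtain hn | ⟨m, rfl⟩ : n < 6 ∨ ∃ m, n = m + 6 :=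
    (lt_or_ge n 6).imp_right fun h ↦ ⟨n - 6, by omega⟩
  · interval_cases n <;> norm_num [seq]
  · simp only [seq_add_six, Int.cast_add, Int.cast_sub, Int.cast_mul, Int.cast_ofNat,
      le_add_iff_nonneg_left, zero_le, ↓reduceIte, Nat.add_one_sub_one, Nat.reduceSubDiff,
      add_tsub_cancel_right, Nat.reduceEqDiff, mul_zero, sub_self, add_zero]
    ring

theorem coeff_numer_mul_inv_denom (n : ℕ) : coeff n (numer * denom⁻¹) = seq n := by
  rw [← (eq_mul_inv_iff_mul_eq constantCoeff_denom_ne_zero).2 mk_seq_mul_denom, coeff_mk]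

def gap (n : ℕ) : ℤ := seq (n + 1) - 4 * seq n

/-- The coefficients come from the factorization
`(X - 4)(X¹⁰ - 3X⁷ - 118X⁶ - 5X⁵ - X⁴ - 1223X³ - 4311X² - 17477X - 69967) - 279868
  = X (X⁴ + 5X³ + 18X² + 56X + 59)(X⁶ - 9X⁵ + 27X⁴ - 32X³ + 13X² - 3X - 1)`. -/
theorem gap_add_ten (n : ℕ) : gap (n + 10) = 3 * gap (n + 7) + 118 * gap (n + 6)
    + 5 * gap (n + 5) + gap (n + 4) + 1223 * gap (n + 3) + 4311 * gap (n + 2)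
    + 17477 * gap (n + 1) + 69967 * gap n + 279868 * seq n := by
  simp only [gap]
  linear_combination seq_add_six (n + 5) + 5 * seq_add_six (n + 4) + 18 * seq_add_six (n + 3)
    + 56 * seq_add_six (n + 2) + 59 * seq_add_six (n + 1)

theorem seq_add_one (n : ℕ) : seq (n + 1) = 4 * seq n + gap n := by
  rw [gap]; ring

theorem seq_nonneg_and_gap_nonneg {n : ℕ} (hn : 3 ≤ n) : 0 ≤ seq n ∧ 0 ≤ gap n := by
  induction n using Nat.strong_induction_on with
  | _ n ih =>
    obtain hn' | ⟨k, hk, rfl⟩ : n < 13 ∨ ∃ k, 3 ≤ k ∧ n = k + 10 :=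
      (lt_or_ge n 13).imp_right fun h ↦ ⟨n - 10, by omega, by omega⟩
    · interval_cases n <;> decide
    · have g (j : ℕ) (hj : k ≤ j ∧ j < k + 10) : 0 ≤ gap j := (ih j (by omega) (by omega)).2
      constructor
      · rw [seq_add_one]
        linarith [(ih (k + 9) (by omega) (by omega)).1, g (k + 9) (by omega)]
      · rw [gap_add_ten]
        linarith [(ih k (by omega) (by omega)).1, g k (by omega), g (k + 1) (by omega),
          g (k + 2) (by omega), g (k + 3) (by omega), g (k + 4) (by omega),
          g (k + 5) (by omega), g (k + 6) (by omega), g (k + 7) (by omega)]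

theorem seq_nonneg (n : ℕ) : 0 ≤ seq n := by
  rcases lt_or_ge n 3 with hn | hn
  · interval_cases n <;> decide
  · exact (seq_nonneg_and_gap_nonneg hn).1

theorem four_mul_seq_le {n : ℕ} (hn : 3 ≤ n) : 4 * seq n ≤ seq (n + 1) := by
  rw [seq_add_one]
  linarith [(seq_nonneg_and_gap_nonneg hn).2]

end LevelOne

/-- The coefficients of the area generating function for level one polyominoes
with cheesy blocks are nonnegative integers, and satisfy `a(n) ≥ 4·a(n-1)`
for all `n ≥ 4`. -/
theorem level_one_coeffs_nonneg_and_growth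
    (E : PowerSeries ℚ)
    (hE : E = (X * (1 - 6*X + 11*X^2 - 6*X^3 + 2*X^4)) *
        (1 - 9*X + 27*X^2 - 32*X^3 + 13*X^4 - 3*X^5 - X^6)⁻¹) :
    (∀ n : ℕ, ∃ k : ℕ, coeff n E = (k : ℚ)) ∧
    (∀ n : ℕ, 4 ≤ n → 4 * coeff (n-1) E ≤ coeff n E) := by
  have hcoeff (n : ℕ) : coeff n E = LevelOne.seq n :=
    hE ▸ LevelOne.coeff_numer_mul_inv_denom n
  refine ⟨fun n ↦ ⟨(LevelOne.seq n).toNat, ?_⟩, fun n hn ↦ ?_⟩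
  · rw [hcoeff]
    exact_mod_cast (Int.toNat_of_nonneg (LevelOne.seq_nonneg n)).symm
  · obtain ⟨m, rfl⟩ : ∃ m, n = m + 1 := ⟨n - 1, by omega⟩
    rw [Nat.add_sub_cancel, hcoeff, hcoeff]
    exact_mod_cast LevelOne.four_mul_seq_le (by omega)
end

section
/- Let a(n) be the coefficient sequence of E₁ = q(1-6q+11q²-6q³+2q⁴)/(1-9q+27q²-32q³+13q⁴-3q⁵-q⁶). Then there exist constants c > 0 and λ ∈ (4.28, 4.30) such that a(n)/λⁿ converges to c as n → ∞. -/
/-!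
The coefficients satisfy the recurrence with characteristic polynomial
`P(x) = x⁶ - 9x⁵ + 27x⁴ - 32x³ + 13x² - 3x - 1`, which has a real root `λ ≈ 4.2897`, all other
roots having modulus `< 2.2`. The differences `d n = a (n+1) - λ a n` no longer see `λ`, and
`|d n| ≤ 3ⁿ` follows by a crude induction on a recurrence for `d`, made contracting by multiplying
with a suitable cofactor. Since `a n / λⁿ` has increments `d n / λⁿ⁺¹`, it converges geometrically
fast, and its limit is positive because `a 8 / λ⁸` exceeds the bound on the tail.
-/

open PowerSeries Filter Topology Finset

theorem LinearRecurrence.IsSolution.abs_le_mul_pow {E : LinearRecurrence ℝ} {u : ℕ → ℝ}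
    (hu : E.IsSolution u) {r C : ℝ} (hr : 0 ≤ r) (hC : 0 ≤ C)
    (hcoeffs : ∑ i, |E.coeffs i| * r ^ (i : ℕ) ≤ r ^ E.order)
    (hinit : ∀ n < E.order, |u n| ≤ C * r ^ n) (n : ℕ) : |u n| ≤ C * r ^ n := by
  induction n using Nat.strong_induction_on with
  | _ n ih =>
    obtain hn | ⟨m, rfl⟩ : n < E.order ∨ ∃ m, n = m + E.order :=
      (lt_or_ge n E.order).imp_right fun h ↦ ⟨n - E.order, by omega⟩
    · exact hinit n hn
    calc |u (m + E.order)| = |∑ i, E.coeffs i * u (m + i)| := by rw [hu m]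
      _ ≤ ∑ i, |E.coeffs i| * (C * r ^ (m + i)) := by
        refine (abs_sum_le_sum_abs _ _).trans (sum_le_sum fun i _ ↦ ?_)
        rw [abs_mul]
        exact mul_le_mul_of_nonneg_left (ih _ (by omega)) (abs_nonneg _)
      _ = C * r ^ m * ∑ i, |E.coeffs i| * r ^ (i : ℕ) := by
        rw [mul_sum]; congr 1 with i; ring
      _ ≤ C * r ^ (m + E.order) := by
        rw [pow_add, mul_assoc]; gcongr

theorem exists_tendsto_div_pow_of_abs_sub_mul_le {u : ℕ → ℝ} {lam r C : ℝ} (hr : 0 ≤ r)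
    (hrlam : r < lam) (hu : ∀ n, |u (n + 1) - lam * u n| ≤ C * r ^ n) :
    ∃ c, Tendsto (fun n ↦ u n / lam ^ n) atTop (𝓝 c) ∧
      ∀ n, |u n / lam ^ n - c| ≤ C / (lam - r) * (r / lam) ^ n := by
  have hlam : 0 < lam := hr.trans_lt hrlam
  have hlam0 : lam ≠ 0 := hlam.ne'
  have hratio : r / lam < 1 := (div_lt_one hlam).2 hrlam
  have hstep (n : ℕ) :
      dist (u n / lam ^ n) (u (n + 1) / lam ^ (n + 1)) ≤ C / lam * (r / lam) ^ n := by
    have hdiff : u (n + 1) / lam ^ (n + 1) - u n / lam ^ n =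
        (u (n + 1) - lam * u n) / lam ^ (n + 1) := by
      field_simp; ring
    have hbound : C / lam * (r / lam) ^ n = C * r ^ n / lam ^ (n + 1) := by
      rw [div_pow, pow_succ]; field_simp
    rw [Real.dist_eq, abs_sub_comm, hdiff, abs_div, abs_of_pos (pow_pos hlam _), hbound]
    exact div_le_div_of_nonneg_right (hu n) (pow_nonneg hlam.le _)
  obtain ⟨c, hc⟩ := cauchySeq_tendsto_of_complete (cauchySeq_of_le_geometric _ _ hratio hstep)
  refine ⟨c, hc, fun n ↦ ?_⟩
  have := dist_le_of_le_geometric_of_tendsto _ _ hratio hstep hc n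
  rw [Real.dist_eq] at this
  convert this using 1
  field_simp

namespace LevelOne

section PowerSeries

variable {R : Type*} [CommRing R]

theorem coeff_mul_denominator (E : R⟦X⟧) (n : ℕ) :
    coeff n (E * (1 - 9*X + 27*X^2 - 32*X^3 + 13*X^4 - 3*X^5 - X^6)) =
      coeff n E - 9 * (if 1 ≤ n then coeff (n - 1) E else 0)
        + 27 * (if 2 ≤ n then coeff (n - 2) E else 0) - 32 * (if 3 ≤ n then coeff (n - 3) E else 0)
        + 13 * (if 4 ≤ n then coeff (n - 4) E else 0) - 3 * (if 5 ≤ n then coeff (n - 5) E else 0)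
        - (if 6 ≤ n then coeff (n - 6) E else 0) := by
  have hD : (1 - 9*X + 27*X^2 - 32*X^3 + 13*X^4 - 3*X^5 - X^6 : R⟦X⟧) =
      1 - C 9 * X^1 + C 27 * X^2 - C 32 * X^3 + C 13 * X^4 - C 3 * X^5 - X^6 := by
    simp only [map_ofNat, pow_one]
  simp only [hD, mul_sub, mul_add, mul_one, mul_left_comm E (C _), map_sub, map_add, coeff_C_mul,
    coeff_mul_X_pow']

theorem coeff_numerator (n : ℕ) :
    coeff n (X * (1 - 6*X + 11*X^2 - 6*X^3 + 2*X^4) : R⟦X⟧) =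
      (if n = 1 then 1 else 0) - 6 * (if n = 2 then 1 else 0) + 11 * (if n = 3 then 1 else 0)
        - 6 * (if n = 4 then 1 else 0) + 2 * (if n = 5 then 1 else 0) := by
  have hN : (X * (1 - 6*X + 11*X^2 - 6*X^3 + 2*X^4) : R⟦X⟧) =
      X^1 - C 6 * X^2 + C 11 * X^3 - C 6 * X^4 + C 2 * X^5 := by
    simp only [map_ofNat]; ring
  simp only [hN, map_sub, map_add, coeff_C_mul, coeff_X_pow]

variable {E : R⟦X⟧}
    (hE : E * (1 - 9*X + 27*X^2 - 32*X^3 + 13*X^4 - 3*X^5 - X^6) =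
      X * (1 - 6*X + 11*X^2 - 6*X^3 + 2*X^4))
include hE

theorem coeff_add_six_of_mul_eq (n : ℕ) :
    coeff (n + 6) E = 9 * coeff (n + 5) E - 27 * coeff (n + 4) E + 32 * coeff (n + 3) E
      - 13 * coeff (n + 2) E + 3 * coeff (n + 1) E + coeff n E := by
  have h := congrArg (coeff (n + 6)) hE
  rw [coeff_mul_denominator, coeff_numerator] at h
  simp only [le_add_iff_nonneg_left, zero_le, ↓reduceIte, Nat.add_one_sub_one, Nat.reduceSubDiff,
    add_tsub_cancel_right, Nat.reduceEqDiff, mul_zero, sub_self, add_zero] at h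
  linear_combination h

theorem initial_coeffs_of_mul_eq :
    coeff 0 E = 0 ∧ coeff 1 E = 1 ∧ coeff 2 E = 3 ∧ coeff 3 E = 11 ∧ coeff 4 E = 44 ∧
      coeff 5 E = 184 ∧ coeff 6 E = 784 ∧ coeff 7 E = 3363 ∧ coeff 8 E = 14451 := by
  have h (n : ℕ) := congrArg (coeff n) hE
  simp only [coeff_mul_denominator, coeff_numerator] at h
  have h0 := h 0; have h1 := h 1; have h2 := h 2; have h3 := h 3; have h4 := h 4; have h5 := h 5
  norm_num at h0 h1 h2 h3 h4 h5
  have c0 : coeff 0 E = 0 := by simpa using h0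
  have c1 : coeff 1 E = 1 := by linear_combination h1 + 9 * h0
  have c2 : coeff 2 E = 3 := by linear_combination h2 + 9 * c1 - 27 * h0
  have c3 : coeff 3 E = 11 := by linear_combination h3 + 9 * c2 - 27 * c1 + 32 * h0
  have c4 : coeff 4 E = 44 := by linear_combination h4 + 9 * c3 - 27 * c2 + 32 * c1 - 13 * h0
  have c5 : coeff 5 E = 184 := by
    linear_combination h5 + 9 * c4 - 27 * c3 + 32 * c2 - 13 * c1 + 3 * h0
  have c6 : coeff 6 E = 784 := by
    linear_combination coeff_add_six_of_mul_eq hE 0 + 9 * c5 - 27 * c4 + 32 * c3 - 13 * c2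
      + 3 * c1 + c0
  have c7 : coeff 7 E = 3363 := by
    linear_combination coeff_add_six_of_mul_eq hE 1 + 9 * c6 - 27 * c5 + 32 * c4 - 13 * c3
      + 3 * c2 + c1
  have c8 : coeff 8 E = 14451 := by
    linear_combination coeff_add_six_of_mul_eq hE 2 + 9 * c7 - 27 * c6 + 32 * c5 - 13 * c4
      + 3 * c3 + c2
  exact ⟨c0, c1, c2, c3, c4, c5, c6, c7, c8⟩

end PowerSeries

theorem exists_charPoly_root_mem_Icc : ∃ lam ∈ Set.Icc (428969/100000 : ℝ) (42897/10000),
    lam ^ 6 - 9 * lam ^ 5 + 27 * lam ^ 4 - 32 * lam ^ 3 + 13 * lam ^ 2 - 3 * lam - 1 = 0 :=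
  intermediate_value_Icc (by norm_num) (by fun_prop) ⟨by norm_num, by norm_num⟩

/-- The recurrence of `n ↦ a (n + 1) - lam * a n` when `P(lam) = 0`. Its characteristic polynomial
is `P(x) M(x) / (x - lam)` with the cofactor `M(x) = x³ + 53/25 x² + 16/5 x + 87/25`, chosen to make
the coefficients small enough for `sum_abs_coeffs_diffRecurrence_le`; thus the `i`-th coefficient
is minus the polynomial part of `P(x) M(x) / x^(i+1)` at `lam`. -/
noncomputable def diffRecurrence (lam : ℝ) : LinearRecurrence ℝ where
  order := 8
  coeffs := ![
    -(lam ^ 8 - 172/25 * lam ^ 7 + 278/25 * lam ^ 6 - 2/25 * lam ^ 5 + 6/25 * lam ^ 4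
      + 403/25 * lam ^ 3 - 1928/25 * lam ^ 2 + 838/25 * lam - 341/25),
    -(lam ^ 7 - 172/25 * lam ^ 6 + 278/25 * lam ^ 5 - 2/25 * lam ^ 4 + 6/25 * lam ^ 3
      + 403/25 * lam ^ 2 - 1928/25 * lam + 838/25),
    -(lam ^ 6 - 172/25 * lam ^ 5 + 278/25 * lam ^ 4 - 2/25 * lam ^ 3 + 6/25 * lam ^ 2
      + 403/25 * lam - 1928/25),
    -(lam ^ 5 - 172/25 * lam ^ 4 + 278/25 * lam ^ 3 - 2/25 * lam ^ 2 + 6/25 * lam + 403/25),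
    -(lam ^ 4 - 172/25 * lam ^ 3 + 278/25 * lam ^ 2 - 2/25 * lam + 6/25),
    -(lam ^ 3 - 172/25 * lam ^ 2 + 278/25 * lam - 2/25),
    -(lam ^ 2 - 172/25 * lam + 278/25),
    -(lam - 172/25)]

theorem isSolution_diffRecurrence {u : ℕ → ℝ}
    (hu : ∀ n, u (n + 6) = 9 * u (n + 5) - 27 * u (n + 4) + 32 * u (n + 3) - 13 * u (n + 2)
      + 3 * u (n + 1) + u n)
    {lam : ℝ} (hlam : lam ^ 6 - 9 * lam ^ 5 + 27 * lam ^ 4 - 32 * lam ^ 3 + 13 * lam ^ 2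
      - 3 * lam - 1 = 0) :
    (diffRecurrence lam).IsSolution fun n ↦ u (n + 1) - lam * u n := by
  intro n
  change _ = ∑ i : Fin 8, _
  simp only [diffRecurrence, Fin.sum_univ_eight, Fin.isValue, Matrix.cons_val_zero,
    Fin.coe_ofNat_eq_mod, Nat.zero_mod, add_zero, Matrix.cons_val_one, Nat.one_mod,
    Matrix.cons_val, Nat.reduceMod, Nat.mod_succ]
  linear_combination 87/25 * hu n + 16/5 * hu (n + 1) + 53/25 * hu (n + 2) + hu (n + 3)
    - (lam ^ 3 + 53/25 * lam ^ 2 + 16/5 * lam + 87/25) * u n * hlam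

theorem sum_abs_coeffs_diffRecurrence_le {lam : ℝ}
    (hlam : lam ∈ Set.Icc (428969/100000) (42897/10000)) :
    ∑ i, |(diffRecurrence lam).coeffs i| * 3 ^ (i : ℕ) ≤ 3 ^ (diffRecurrence lam).order := by
  obtain ⟨hl, hu⟩ := hlam
  have hlo (k : ℕ) : (428969/100000 : ℝ) ^ k ≤ lam ^ k := pow_le_pow_left₀ (by norm_num) hl k
  have hhi (k : ℕ) : lam ^ k ≤ (42897/10000 : ℝ) ^ k := pow_le_pow_left₀ (by linarith) hu k
  have hcoeff (i : Fin 8) :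
      |(diffRecurrence lam).coeffs i| ≤ ![4, 4, 8, 17, 1/10, 1/10, 1/10, 13/5] i := by
    rw [abs_le]
    fin_cases i <;>
      simp only [diffRecurrence, Fin.reduceFinMk, Fin.zero_eta, Fin.mk_one, Fin.isValue,
        Matrix.cons_val_zero, Matrix.cons_val_one, Matrix.cons_val] <;>
      constructor <;>
      linarith [hlo 2, hlo 3, hlo 4, hlo 5, hlo 6, hlo 7, hlo 8,
        hhi 2, hhi 3, hhi 4, hhi 5, hhi 6, hhi 7, hhi 8]
  calc ∑ i, |(diffRecurrence lam).coeffs i| * 3 ^ (i : ℕ)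
      ≤ ∑ i : Fin 8, ![4, 4, 8, 17, 1/10, 1/10, 1/10, 13/5] i * 3 ^ (i : ℕ) :=
        sum_le_sum fun i _ ↦ mul_le_mul_of_nonneg_right (hcoeff i) (by positivity)
    _ ≤ 3 ^ (diffRecurrence lam).order := by
        simp only [diffRecurrence, Fin.sum_univ_eight, Fin.isValue, Matrix.cons_val_zero,
          Matrix.cons_val_one, Matrix.cons_val, Fin.coe_ofNat_eq_mod, Nat.reduceMod, Nat.mod_succ]
        norm_num

end LevelOne

/-- The coefficient sequence `a(n)` of the area generating function for level
one polyominoes with cheesy blocks satisfies `a(n)/λⁿ → c` for some constant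
`c > 0` and some `λ ∈ (4.28, 4.30)`. -/
theorem level_one_asymptotics
    (E : PowerSeries ℚ)
    (hE : E = (X * (1 - 6*X + 11*X^2 - 6*X^3 + 2*X^4)) *
        (1 - 9*X + 27*X^2 - 32*X^3 + 13*X^4 - 3*X^5 - X^6)⁻¹)
    (a : ℕ → ℚ) (ha : ∀ n, a n = coeff n E) :
    ∃ c lam : ℝ, 0 < c ∧ lam ∈ Set.Ioo (4.28 : ℝ) 4.30 ∧
      Tendsto (fun n : ℕ => (a n : ℝ) / lam ^ n) atTop (nhds c) := by
  have hED : E * (1 - 9*X + 27*X^2 - 32*X^3 + 13*X^4 - 3*X^5 - X^6) =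
      X * (1 - 6*X + 11*X^2 - 6*X^3 + 2*X^4) := by
    rw [hE, mul_assoc, PowerSeries.inv_mul_cancel _ (by simp), mul_one]
  obtain ⟨h0, h1, h2, h3, h4, h5, h6, h7, h8⟩ := LevelOne.initial_coeffs_of_mul_eq hED
  set u : ℕ → ℝ := fun n ↦ a n with hu
  have hrec (n : ℕ) : u (n + 6) = 9 * u (n + 5) - 27 * u (n + 4) + 32 * u (n + 3)
      - 13 * u (n + 2) + 3 * u (n + 1) + u n := by
    simp only [hu, ha]; exact_mod_cast LevelOne.coeff_add_six_of_mul_eq hED n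
  obtain ⟨lam, ⟨hlo, hhi⟩, hroot⟩ := LevelOne.exists_charPoly_root_mem_Icc
  have hinit : ∀ n < 8, |u (n + 1) - lam * u n| ≤ 1 * 3 ^ n := by
    intro n hn
    interval_cases n <;> norm_num [hu, ha, h0, h1, h2, h3, h4, h5, h6, h7, h8, abs_le] <;>
      constructor <;> linarith
  have hdiff := (LevelOne.isSolution_diffRecurrence hrec hroot).abs_le_mul_pow (by norm_num)
    zero_le_one (LevelOne.sum_abs_coeffs_diffRecurrence_le ⟨hlo, hhi⟩) hinit
  obtain ⟨c, hc, hdist⟩ :=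
    exists_tendsto_div_pow_of_abs_sub_mul_le (by norm_num) (by linarith) hdiff
  refine ⟨c, lam, ?_, ⟨by linarith, by linarith⟩, hc⟩
  have hu8 : u 8 = 14451 := by simp [hu, ha, h8]
  have htail : 1 / (lam - 3) * (3 / lam) ^ 8 < u 8 / lam ^ 8 := by
    rw [div_pow, ← mul_div_assoc, div_lt_div_iff_of_pos_right (by positivity),
      one_div_mul_eq_div, div_lt_iff₀ (by linarith), hu8]
    linarith
  linarith [(abs_le.1 (hdist 8)).2]
end
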